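/- Let P be the four-element poset {x₁, x₂, y₁, y₂} in which xᵢ < yⱼ for all i, j ∈ {1,2}, with x₁, x₂ incomparable and y₁, y₂ incomparable. Let M be the P-module over ℝ with M(p) = ℝ for every p ∈ P, whose structure map φ_{x₁y₁} is multiplication by 2 and whose structure maps φ_{x₁y₂}, φ_{x₂y₁}, φ_{x₂y₂} are the identity. Then M does not admit an inner product structure. -/

import Mathlib

/-!
All four structure maps are injective, so the compatibility condition applies to every vector:
writing `a p = ⟨1, 1⟩_p`, it gives `4 a y₁ = a x₁ = a y₂ = a x₂ = a y₁`, hence `a y₁ = 0`,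
contradicting definiteness.
-/

/-- The four-element poset {x₁, x₂, y₁, y₂} with xᵢ < yⱼ for all i, j. -/
inductive P5 : Type
  | x1 | x2 | y1 | y2
deriving DecidableEq

/-- `true` on the minimal elements x₁, x₂. -/
def P5.isLow : P5 → Bool
  | .x1 => true
  | .x2 => true
  | .y1 => false
  | .y2 => false

instance : Fintype P5 :=
  ⟨⟨[P5.x1, P5.x2, P5.y1, P5.y2], by decide⟩, fun x => by cases x <;> decide⟩

instance : PartialOrder P5 where
  le a b := a = b ∨ (a.isLow = true ∧ b.isLow = false)
  le_refl a := Or.inl rfl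
  le_trans a b c hab hbc := by
    rcases hab with rfl | hab
    · exact hbc
    · rcases hbc with rfl | hbc
      · exact Or.inr hab
      · exact Or.inr ⟨hab.1, hbc.2⟩
  le_antisymm a b hab hba := by
    rcases hab with rfl | hab
    · rfl
    · rcases hba with rfl | hba
      · rfl
      · exact absurd (hab.2.symm.trans hba.1) (by simp)

/-- An inner product structure on a `C`-module over ℝ: a family of inner products
(given as `InnerProductSpace.Core`) such that each structure map preserves inner
products on the orthogonal complement of its kernel. -/
structure IPStructure {C : Type*} [PartialOrder C] (M : C → Type*)
    [∀ x, AddCommGroup (M x)] [∀ x, Module ℝ (M x)]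
    (φ : ∀ x y : C, x ≤ y → (M x →ₗ[ℝ] M y)) where
  core : ∀ x, InnerProductSpace.Core ℝ (M x)
  compat : ∀ (x y : C) (h : x ≤ y) (v w : M x),
    (∀ u ∈ LinearMap.ker (φ x y h), (core x).inner v u = 0) →
    (∀ u ∈ LinearMap.ker (φ x y h), (core x).inner w u = 0) →
    (core y).inner (φ x y h v) (φ x y h w) = (core x).inner v w

/-- The structure maps: multiplication by 2 on x₁ → y₁ and the identity otherwise. -/
noncomputable def phi5 (a b : P5) (_ : a ≤ b) : ℝ →ₗ[ℝ] ℝ :=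
  if a = P5.x1 ∧ b = P5.y1 then (2 : ℝ) • LinearMap.id else LinearMap.id

namespace InnerProductSpace.Core

variable {𝕜 : Type*} [RCLike 𝕜]

theorem inner_eq_conj_mul_mul_inner_one_one (c : InnerProductSpace.Core 𝕜 𝕜) (v w : 𝕜) :
    c.inner v w = starRingEnd 𝕜 v * w * c.inner 1 1 := by
  have hleft := inner_smul_left (𝕜 := 𝕜) (1 : 𝕜) (w • (1 : 𝕜)) (r := v)
  have hright := inner_smul_right (𝕜 := 𝕜) (1 : 𝕜) (1 : 𝕜) (r := w)
  simp only [smul_eq_mul, mul_one] at hleft hright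
  rw [mul_assoc, ← hright, ← hleft]

theorem inner_one_one_ne_zero (c : InnerProductSpace.Core 𝕜 𝕜) : c.inner 1 1 ≠ 0 :=
  fun h => one_ne_zero (c.definite 1 h)

end InnerProductSpace.Core

namespace IPStructure

variable {C : Type*} [PartialOrder C] {M : C → Type*} [∀ x, AddCommGroup (M x)]
  [∀ x, Module ℝ (M x)] {φ : ∀ x y : C, x ≤ y → (M x →ₗ[ℝ] M y)}

theorem inner_map_eq_of_injective (s : IPStructure M φ) {x y : C} (h : x ≤ y)
    (hφ : Function.Injective (φ x y h)) (v w : M x) :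
    (s.core y).inner (φ x y h v) (φ x y h w) = (s.core x).inner v w := by
  have hker : ∀ u ∈ LinearMap.ker (φ x y h), ∀ v, (s.core x).inner v u = 0 := by
    intro u hu v
    rw [LinearMap.ker_eq_bot.mpr hφ, Submodule.mem_bot] at hu
    subst hu
    let _ := s.core x
    exact InnerProductSpace.Core.inner_zero_right v
  exact s.compat x y h v w (fun u hu => hker u hu v) (fun u hu => hker u hu w)

end IPStructure

theorem IPStructure.sq_mul_inner_one_one {C : Type*} [PartialOrder C]
    {φ : ∀ x y : C, x ≤ y → (ℝ →ₗ[ℝ] ℝ)} (s : IPStructure (fun _ => ℝ) φ) {x y : C} (h : x ≤ y)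
    (hφ : Function.Injective (φ x y h)) :
    φ x y h 1 ^ 2 * (s.core y).inner 1 1 = (s.core x).inner 1 1 := by
  rw [← s.inner_map_eq_of_injective h hφ 1 1,
    (s.core y).inner_eq_conj_mul_mul_inner_one_one (φ x y h 1)]
  simp [sq]

theorem P5.le_of_isLow {a b : P5} (ha : a.isLow = true) (hb : b.isLow = false) : a ≤ b :=
  Or.inr ⟨ha, hb⟩

theorem phi5_apply (a b : P5) (h : a ≤ b) (v : ℝ) :
    phi5 a b h v = if a = .x1 ∧ b = .y1 then 2 * v else v := by
  unfold phi5
  split_ifs <;> simp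

theorem phi5_injective (a b : P5) (h : a ≤ b) : Function.Injective (phi5 a b h) := by
  intro v w hvw
  simp only [phi5_apply] at hvw
  split_ifs at hvw <;> linarith

theorem stmt5 : ¬ Nonempty (IPStructure (fun _ : P5 => ℝ) phi5) := by
  rintro ⟨s⟩
  have transport (a b : P5) (ha : a.isLow = true) (hb : b.isLow = false) :=
    s.sq_mul_inner_one_one (P5.le_of_isLow ha hb) (phi5_injective a b _)
  have h11 := transport .x1 .y1 rfl rfl
  have h12 := transport .x1 .y2 rfl rfl
  have h21 := transport .x2 .y1 rfl rfl
  have h22 := transport .x2 .y2 rfl rfl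
  simp [phi5_apply] at h11 h12 h21 h22
  exact (s.core .y1).inner_one_one_ne_zero (by linarith)
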